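/- Let A, B, C, D be pairwise distinct points of ℝ² lying on a circle with center O and radius r > 0, and let ℓ be a line containing none of A, B, C, D. Suppose some conic G through A, B, C, D, given by a polynomial not proportional to (x − O₁)² + (y − O₂)² − r², meets ℓ in exactly two points P ≠ Q with dist(O, P) = dist(O, Q), and let M = (P + Q)/2. Then every conic through A, B, C, D meets ℓ either in the empty set, or exactly in {M}, or exactly in a pair of distinct points whose midpoint is M. -/

import Mathlib

/-!
The conics through four concyclic points form a pencil, spanned by the line pairs `AB·CD` and
`AC·BD`. For a conic `f` the condition `f P = f Q` is linear in `f`; it holds for the circle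
(`P`, `Q` are equidistant from `O`) and for `G` (`P`, `Q` lie on `G`), two independent members of
the pencil, hence for every conic through `A, B, C, D`. On `ℓ`, parametrised as
`M + s • (Q - P)`, such a conic is then an even quadratic `a s² + c`, whose zero set is empty,
`{M}`, or a pair symmetric about `M`; the remaining case `a = c = 0` means that the conic
contains `ℓ`, and then it vanishes identically because `A, B, C` are off `ℓ` and not collinear.
-/

/-- A conic (possibly degenerate) in the affine plane `ℝ × ℝ`, given by the six
coefficients of a polynomial `a·x² + b·x·y + c·y² + d·x + e·y + g`. -/
structure Conic where
  a : ℝ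
  b : ℝ
  c : ℝ
  d : ℝ
  e : ℝ
  g : ℝ

/-- Evaluation of the defining polynomial of a conic at a point of `ℝ × ℝ`. -/
def Conic.eval (f : Conic) (p : ℝ × ℝ) : ℝ :=
  f.a * p.1 ^ 2 + f.b * p.1 * p.2 + f.c * p.2 ^ 2 + f.d * p.1 + f.e * p.2 + f.g

/-- The defining polynomial is nonzero. -/
def Conic.Nonzero (f : Conic) : Prop :=
  ¬ (f.a = 0 ∧ f.b = 0 ∧ f.c = 0 ∧ f.d = 0 ∧ f.e = 0 ∧ f.g = 0)

/-- The conic passes through the four points `A`, `B`, `C`, `D`. -/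
def Conic.Through (f : Conic) (A B C D : ℝ × ℝ) : Prop :=
  f.eval A = 0 ∧ f.eval B = 0 ∧ f.eval C = 0 ∧ f.eval D = 0

/-- No three of the four points `A`, `B`, `C`, `D` are collinear. -/
def NoThreeCollinear (A B C D : ℝ × ℝ) : Prop :=
  ¬ Collinear ℝ ({A, B, C} : Set (ℝ × ℝ)) ∧ ¬ Collinear ℝ ({A, B, D} : Set (ℝ × ℝ)) ∧
  ¬ Collinear ℝ ({A, C, D} : Set (ℝ × ℝ)) ∧ ¬ Collinear ℝ ({B, C, D} : Set (ℝ × ℝ))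

/-- The line through `M` with direction `u`. -/
def parmLine (M u : ℝ × ℝ) : Set (ℝ × ℝ) :=
  {p | ∃ t : ℝ, p = M + t • u}

/-- The polynomial `(x − O₁)² + (y − O₂)² − r²` of the circle with center `O` and
radius `r`, as a conic. -/
def circleConic (O : ℝ × ℝ) (r : ℝ) : Conic :=
  ⟨1, 0, 1, -2 * O.1, -2 * O.2, O.1 ^ 2 + O.2 ^ 2 - r ^ 2⟩

/-- The polynomial of `f` is proportional to that of `h`. -/
def Conic.PropTo (f h : Conic) : Prop :=
  ∃ k : ℝ, f.a = k * h.a ∧ f.b = k * h.b ∧ f.c = k * h.c ∧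
    f.d = k * h.d ∧ f.e = k * h.e ∧ f.g = k * h.g

/-- `P` lies on the circle with center `O` and radius `r`. -/
def OnCircle (P O : ℝ × ℝ) (r : ℝ) : Prop :=
  (P.1 - O.1) ^ 2 + (P.2 - O.2) ^ 2 = r ^ 2

def cross (v w : ℝ × ℝ) : ℝ := v.1 * w.2 - v.2 * w.1

def lineForm (X Y p : ℝ × ℝ) : ℝ := cross (Y - X) (p - X)

@[simp]
lemma lineForm_left (X Y : ℝ × ℝ) : lineForm X Y X = 0 := by
  simp [lineForm, cross]

@[simp]
lemma lineForm_right (X Y : ℝ × ℝ) : lineForm X Y Y = 0 := by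
  simp only [lineForm, cross]; ring

lemma ne_of_lineForm_ne_zero {X Y Z : ℝ × ℝ} (h : lineForm X Y Z ≠ 0) : X ≠ Y := by
  rintro rfl; simp [lineForm, cross] at h

lemma fst_sq_add_snd_sq_pos {u : ℝ × ℝ} (hu : u ≠ 0) : 0 < u.1 ^ 2 + u.2 ^ 2 := by
  have : u.1 ≠ 0 ∨ u.2 ≠ 0 := by
    by_contra! h
    exact hu (Prod.ext h.1 h.2)
  rcases this with h | h
  · exact add_pos_of_pos_of_nonneg (sq_pos_of_ne_zero h) (sq_nonneg _)
  · exact add_pos_of_nonneg_of_pos (sq_nonneg _) (sq_pos_of_ne_zero h)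

lemma mem_parmLine_iff {V u p : ℝ × ℝ} (hu : u ≠ 0) :
    p ∈ parmLine V u ↔ cross u (p - V) = 0 := by
  constructor
  · rintro ⟨t, rfl⟩
    simp only [cross, add_sub_cancel_left, Prod.smul_fst, Prod.smul_snd, smul_eq_mul]
    ring
  · intro h
    have hn := (fst_sq_add_snd_sq_pos hu).ne'
    refine ⟨(u.1 * (p.1 - V.1) + u.2 * (p.2 - V.2)) / (u.1 ^ 2 + u.2 ^ 2), Prod.ext ?_ ?_⟩ <;>
      simp only [cross, Prod.fst_sub, Prod.snd_sub, Prod.fst_add, Prod.snd_add, Prod.smul_fst,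
        Prod.smul_snd, smul_eq_mul] at h ⊢ <;>
      field_simp
    · linear_combination (-u.2) * h
    · linear_combination u.1 * h

lemma parmLine_eq_of_mem {V u M : ℝ × ℝ} (hM : M ∈ parmLine V u) {k : ℝ} (hk : k ≠ 0) :
    parmLine M (k • u) = parmLine V u := by
  obtain ⟨t, rfl⟩ := hM
  ext p
  constructor
  · rintro ⟨s, rfl⟩
    exact ⟨t + s * k, by rw [add_smul, smul_smul, add_assoc]⟩
  · rintro ⟨s, rfl⟩
    exact ⟨(s - t) / k, by rw [smul_smul, div_mul_cancel₀ _ hk, sub_smul]; abel⟩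

lemma parmLine_midpoint {V u P Q : ℝ × ℝ} (hP : P ∈ parmLine V u) (hQ : Q ∈ parmLine V u)
    (hPQ : P ≠ Q) : parmLine (midpoint ℝ P Q) (Q - P) = parmLine V u := by
  obtain ⟨tP, rfl⟩ := hP
  obtain ⟨tQ, rfl⟩ := hQ
  have hPQ' : tQ - tP ≠ 0 := sub_ne_zero.2 fun h => hPQ (by rw [h])
  have hM : midpoint ℝ (V + tP • u) (V + tQ • u) = V + ((tP + tQ) / 2) • u := by
    rw [midpoint_eq_smul_add]
    ext <;> simp <;> ring
  rw [hM, show V + tQ • u - (V + tP • u) = (tQ - tP) • u by rw [sub_smul]; abel]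
  exact parmLine_eq_of_mem ⟨_, rfl⟩ hPQ'

lemma lineForm_ne_zero_of_onCircle {X Y Z O : ℝ × ℝ} {r : ℝ} (hX : OnCircle X O r)
    (hY : OnCircle Y O r) (hZ : OnCircle Z O r) (hXY : X ≠ Y) (hXZ : X ≠ Z) (hYZ : Y ≠ Z) :
    lineForm X Y Z ≠ 0 := by
  intro h
  have hYX : Y - X ≠ 0 := sub_ne_zero.2 hXY.symm
  obtain ⟨k, rfl⟩ := (mem_parmLine_iff hYX).2 h
  have hk : k * (k - 1) * ((Y - X).1 ^ 2 + (Y - X).2 ^ 2) = 0 := by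
    simp only [OnCircle, Prod.fst_add, Prod.snd_add, Prod.smul_fst, Prod.smul_snd, smul_eq_mul,
      Prod.fst_sub, Prod.snd_sub] at hX hY hZ ⊢
    linear_combination hZ - k * hY + (k - 1) * hX
  rcases mul_eq_zero.1 hk with hk | hk
  · rcases mul_eq_zero.1 hk with rfl | hk
    · exact hXZ (by simp)
    · exact hYZ (by rw [sub_eq_zero.1 hk]; simp)
  · exact (fst_sq_add_snd_sq_pos hYX).ne' hk

lemma quadratic_coeffs_eq_zero {α β γ t₁ t₂ t₃ : ℝ} (h₁₂ : t₁ ≠ t₂) (h₁₃ : t₁ ≠ t₃)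
    (h₂₃ : t₂ ≠ t₃) (e₁ : α * t₁ ^ 2 + β * t₁ + γ = 0) (e₂ : α * t₂ ^ 2 + β * t₂ + γ = 0)
    (e₃ : α * t₃ ^ 2 + β * t₃ + γ = 0) : α = 0 ∧ β = 0 ∧ γ = 0 := by
  have r₁₂ : α * (t₁ + t₂) + β = 0 := by
    apply mul_left_cancel₀ (sub_ne_zero.2 h₁₂)
    linear_combination e₁ - e₂
  have r₁₃ : α * (t₁ + t₃) + β = 0 := by
    apply mul_left_cancel₀ (sub_ne_zero.2 h₁₃)
    linear_combination e₁ - e₃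
  have hα : α = 0 := by
    apply mul_left_cancel₀ (sub_ne_zero.2 h₂₃)
    linear_combination r₁₂ - r₁₃
  refine ⟨hα, ?_, ?_⟩
  · linear_combination r₁₂ - (t₁ + t₂) * hα
  · linear_combination e₁ - t₁ ^ 2 * hα - t₁ * (r₁₂ - (t₁ + t₂) * hα)

lemma exists_affine_eq_mul_lineForm {α β γ : ℝ} {X Y : ℝ × ℝ} (hXY : X ≠ Y)
    (hX : α * X.1 + β * X.2 + γ = 0) (hY : α * Y.1 + β * Y.2 + γ = 0) :
    ∃ k : ℝ, ∀ p : ℝ × ℝ, α * p.1 + β * p.2 + γ = k * lineForm X Y p := by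
  have hrel : α * (Y.1 - X.1) + β * (Y.2 - X.2) = 0 := by linear_combination hY - hX
  have hne : Y.1 - X.1 ≠ 0 ∨ Y.2 - X.2 ≠ 0 := by
    by_contra! h
    exact hXY (Prod.ext (sub_eq_zero.1 h.1).symm (sub_eq_zero.1 h.2).symm)
  rcases hne with h | h
  · refine ⟨β / (Y.1 - X.1), fun p => ?_⟩
    simp only [lineForm, cross, Prod.fst_sub, Prod.snd_sub]
    field_simp
    linear_combination (Y.1 - X.1) * hX + (p.1 - X.1) * hrel
  · refine ⟨-α / (Y.2 - X.2), fun p => ?_⟩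
    simp only [lineForm, cross, Prod.fst_sub, Prod.snd_sub]
    field_simp
    linear_combination (Y.2 - X.2) * hX + (p.2 - X.2) * hrel

lemma circleConic_eval (O p : ℝ × ℝ) (r : ℝ) :
    (circleConic O r).eval p = (p.1 - O.1) ^ 2 + (p.2 - O.2) ^ 2 - r ^ 2 := by
  simp only [circleConic, Conic.eval]; ring

lemma circleConic_nonzero (O : ℝ × ℝ) (r : ℝ) : (circleConic O r).Nonzero :=
  fun h => one_ne_zero h.1

lemma circleConic_through {O A B C D : ℝ × ℝ} {r : ℝ} (hA : OnCircle A O r)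
    (hB : OnCircle B O r) (hC : OnCircle C O r) (hD : OnCircle D O r) :
    (circleConic O r).Through A B C D := by
  simp only [Conic.Through, circleConic_eval]
  exact ⟨sub_eq_zero.2 hA, sub_eq_zero.2 hB, sub_eq_zero.2 hC, sub_eq_zero.2 hD⟩

namespace Conic

def quadForm (f : Conic) (v : ℝ × ℝ) : ℝ := f.a * v.1 ^ 2 + f.b * v.1 * v.2 + f.c * v.2 ^ 2

def polar (f : Conic) (v w : ℝ × ℝ) : ℝ :=
  2 * f.a * v.1 * w.1 + f.b * (v.1 * w.2 + v.2 * w.1) + 2 * f.c * v.2 * w.2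

def dirDeriv (f : Conic) (P v : ℝ × ℝ) : ℝ := f.polar P v + f.d * v.1 + f.e * v.2

lemma eval_add_smul_add_smul (f : Conic) (P v w : ℝ × ℝ) (s t : ℝ) :
    f.eval (P + s • v + t • w) = f.quadForm v * s ^ 2 + f.polar v w * (s * t)
      + f.quadForm w * t ^ 2 + f.dirDeriv P v * s + f.dirDeriv P w * t + f.eval P := by
  simp only [eval, quadForm, polar, dirDeriv, Prod.fst_add, Prod.snd_add, Prod.smul_fst,
    Prod.smul_snd, smul_eq_mul]
  ring

lemma eval_add_smul (f : Conic) (P v : ℝ × ℝ) (s : ℝ) :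
    f.eval (P + s • v) = f.quadForm v * s ^ 2 + f.dirDeriv P v * s + f.eval P := by
  simpa using f.eval_add_smul_add_smul P v v s 0

def subMul (f : Conic) (μ : ℝ) (g : Conic) : Conic :=
  ⟨f.a - μ * g.a, f.b - μ * g.b, f.c - μ * g.c, f.d - μ * g.d, f.e - μ * g.e, f.g - μ * g.g⟩

lemma eval_subMul (f : Conic) (μ : ℝ) (g : Conic) (p : ℝ × ℝ) :
    (f.subMul μ g).eval p = f.eval p - μ * g.eval p := by
  simp only [subMul, eval]; ring

lemma coeffs_eq_zero_of_eval_eq_zero {f : Conic} (h : ∀ p, f.eval p = 0) :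
    f.a = 0 ∧ f.b = 0 ∧ f.c = 0 ∧ f.d = 0 ∧ f.e = 0 ∧ f.g = 0 := by
  have h₁ := h (0, 0); have h₂ := h (1, 0); have h₃ := h (-1, 0)
  have h₄ := h (0, 1); have h₅ := h (0, -1); have h₆ := h (1, 1)
  norm_num [eval] at h₁ h₂ h₃ h₄ h₅ h₆
  exact ⟨by linarith, by linarith, by linarith, by linarith, by linarith, by linarith⟩

lemma not_nonzero_of_eval_eq_zero {f : Conic} (h : ∀ p, f.eval p = 0) : ¬ f.Nonzero :=
  fun hf => hf (coeffs_eq_zero_of_eval_eq_zero h)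

lemma propTo_of_eval_eq_mul {f g : Conic} {k : ℝ} (h : ∀ p, f.eval p = k * g.eval p) :
    f.PropTo g := by
  obtain ⟨ha, hb, hc, hd, he, hg⟩ := coeffs_eq_zero_of_eval_eq_zero (f := f.subMul k g)
    fun p => by rw [eval_subMul, h, sub_self]
  simp only [subMul, sub_eq_zero] at ha hb hc hd he hg
  exact ⟨k, ha, hb, hc, hd, he, hg⟩

lemma coeffs_eq_zero_of_eval_line {f : Conic} {V u : ℝ × ℝ} {t₁ t₂ t₃ : ℝ} (h₁₂ : t₁ ≠ t₂)
    (h₁₃ : t₁ ≠ t₃) (h₂₃ : t₂ ≠ t₃) (e₁ : f.eval (V + t₁ • u) = 0)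
    (e₂ : f.eval (V + t₂ • u) = 0) (e₃ : f.eval (V + t₃ • u) = 0) :
    f.quadForm u = 0 ∧ f.dirDeriv V u = 0 ∧ f.eval V = 0 := by
  rw [eval_add_smul] at e₁ e₂ e₃
  exact quadratic_coeffs_eq_zero h₁₂ h₁₃ h₂₃ e₁ e₂ e₃

lemma exists_eval_eq_cross_mul {f : Conic} {V u : ℝ × ℝ} (hu : u ≠ 0)
    (h : ∀ t : ℝ, f.eval (V + t • u) = 0) :
    ∃ α β γ : ℝ, ∀ p, f.eval p = cross u (p - V) * (α * p.1 + β * p.2 + γ) := by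
  obtain ⟨hq, hd, hV⟩ := coeffs_eq_zero_of_eval_line (t₁ := 0) (t₂ := 1) (t₃ := -1)
    (by norm_num) (by norm_num) (by norm_num) (h 0) (h 1) (h (-1))
  set n := u.1 ^ 2 + u.2 ^ 2
  have hn : n ≠ 0 := (fst_sq_add_snd_sq_pos hu).ne'
  set w : ℝ × ℝ := (-u.2, u.1)
  -- coordinates of `p - V` in the orthogonal frame `u, w`
  have key : ∀ p : ℝ × ℝ, n ^ 2 * f.eval p = cross u (p - V) *
      (f.polar u w * (u.1 * (p.1 - V.1) + u.2 * (p.2 - V.2))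
        + f.quadForm w * cross u (p - V) + f.dirDeriv V w * n) := by
    intro p
    have hp : p = V + ((u.1 * (p.1 - V.1) + u.2 * (p.2 - V.2)) / n) • u
        + (cross u (p - V) / n) • w := by
      ext <;> simp [w, cross] <;> field_simp <;> ring
    rw [hp, eval_add_smul_add_smul, hq, hd, hV, ← hp]
    field_simp
    ring
  refine ⟨(f.polar u w * u.1 - f.quadForm w * u.2) / n ^ 2,
    (f.polar u w * u.2 + f.quadForm w * u.1) / n ^ 2,
    (f.dirDeriv V w * n - f.polar u w * (u.1 * V.1 + u.2 * V.2)
      - f.quadForm w * (u.1 * V.2 - u.2 * V.1)) / n ^ 2, fun p => ?_⟩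
  have hk := key p
  simp only [cross, Prod.fst_sub, Prod.snd_sub] at hk ⊢
  field_simp
  linear_combination hk

lemma not_nonzero_of_eval_line {f : Conic} {V u A B C : ℝ × ℝ} (hu : u ≠ 0)
    (hline : ∀ t : ℝ, f.eval (V + t • u) = 0) (hA : A ∉ parmLine V u)
    (hB : B ∉ parmLine V u) (hC : C ∉ parmLine V u) (hABC : lineForm A B C ≠ 0)
    (hfA : f.eval A = 0) (hfB : f.eval B = 0) (hfC : f.eval C = 0) : ¬ f.Nonzero := by
  obtain ⟨α, β, γ, hf⟩ := exists_eval_eq_cross_mul hu hline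
  have hoff : ∀ X, X ∉ parmLine V u → f.eval X = 0 → α * X.1 + β * X.2 + γ = 0 :=
    fun X hX hfX => (mul_eq_zero.1 ((hf X).symm.trans hfX)).resolve_left
      (mt (mem_parmLine_iff hu).2 hX)
  obtain ⟨k, hk⟩ := exists_affine_eq_mul_lineForm (ne_of_lineForm_ne_zero hABC)
    (hoff A hA hfA) (hoff B hB hfB)
  have hk0 : k = 0 := (mul_eq_zero.1 ((hk C).symm.trans (hoff C hC hfC))).resolve_right hABC
  exact not_nonzero_of_eval_eq_zero fun p => by rw [hf p, hk p, hk0]; ring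

def ofAffineMul (α β γ α' β' γ' : ℝ) : Conic :=
  ⟨α * α', α * β' + β * α', β * β', α * γ' + γ * α', β * γ' + γ * β', γ * γ'⟩

def lineProd (X Y Z W : ℝ × ℝ) : Conic :=
  ofAffineMul (X.2 - Y.2) (Y.1 - X.1) (cross X Y) (Z.2 - W.2) (W.1 - Z.1) (cross Z W)

lemma eval_lineProd (X Y Z W p : ℝ × ℝ) :
    (lineProd X Y Z W).eval p = lineForm X Y p * lineForm Z W p := by
  simp only [lineProd, ofAffineMul, eval, lineForm, cross, Prod.fst_sub, Prod.snd_sub]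
  ring

theorem exists_eval_eq_pencil {f : Conic} {A B C D : ℝ × ℝ} (hCD : C ≠ D)
    (hABC : lineForm A B C ≠ 0) (hABD : lineForm A B D ≠ 0) (hf : f.Through A B C D) :
    ∃ l m : ℝ, ∀ p, f.eval p =
      l * (lineForm A B p * lineForm C D p) + m * (lineForm A C p * lineForm B D p) := by
  obtain ⟨hfA, hfB, hfC, hfD⟩ := hf
  set E : ℝ × ℝ := A + (2 : ℝ) • (B - A)
  have hE : lineForm A C E * lineForm B D E ≠ 0 := by
    have h₁ : lineForm A C E = -2 * lineForm A B C := by simp [E, lineForm, cross]; ring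
    have h₂ : lineForm B D E = -lineForm A B D := by simp [E, lineForm, cross]; ring
    rw [h₁, h₂]
    exact mul_ne_zero (mul_ne_zero (by norm_num) hABC) (neg_ne_zero.2 hABD)
  -- subtract the multiple of the line pair `AC·BD` that kills the third point `E` of `AB`
  set m := f.eval E / (lineForm A C E * lineForm B D E)
  set h := f.subMul m (lineProd A C B D)
  have hh : ∀ p, h.eval p = f.eval p - m * (lineForm A C p * lineForm B D p) := fun p => by
    rw [eval_subMul, eval_lineProd]
  have hline : ∀ t : ℝ, h.eval (A + t • (B - A)) = 0 := by
    obtain ⟨hq, hd, hA⟩ := coeffs_eq_zero_of_eval_line (t₁ := 0) (t₂ := 1) (t₃ := 2)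
      (f := h) (V := A) (u := B - A) (by norm_num) (by norm_num) (by norm_num)
      (by simp [hh, hfA]) (by simp [hh, hfB]) (by rw [hh, div_mul_cancel₀ _ hE, sub_self])
    intro t
    rw [eval_add_smul, hq, hd, hA]
    ring
  obtain ⟨α, β, γ, hfac⟩ :=
    exists_eval_eq_cross_mul (sub_ne_zero.2 (ne_of_lineForm_ne_zero hABC).symm) hline
  have hC : α * C.1 + β * C.2 + γ = 0 := by
    have := hfac C
    simp only [hh, hfC, lineForm_right, zero_mul, mul_zero, sub_zero] at this
    exact (mul_eq_zero.1 this.symm).resolve_left hABC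
  have hD : α * D.1 + β * D.2 + γ = 0 := by
    have := hfac D
    simp only [hh, hfD, lineForm_right, mul_zero, sub_zero] at this
    exact (mul_eq_zero.1 this.symm).resolve_left hABD
  obtain ⟨l, hl⟩ := exists_affine_eq_mul_lineForm hCD hC hD
  refine ⟨l, m, fun p => ?_⟩
  have := hfac p
  rw [hh, hl] at this
  change _ = lineForm A B p * _ at this
  linear_combination this

lemma det_ne_zero_of_not_propTo {S G : Conic} {l₁ l₂ : ℝ × ℝ → ℝ} {a b a' b' : ℝ}
    (hS : ∀ p, S.eval p = a * l₁ p + b * l₂ p) (hG : ∀ p, G.eval p = a' * l₁ p + b' * l₂ p)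
    (hS0 : S.Nonzero) (hGS : ¬ G.PropTo S) : a * b' - a' * b ≠ 0 := by
  intro hΔ
  apply hGS
  rcases eq_or_ne b 0 with hb | hb
  · have ha : a ≠ 0 := by
      rintro rfl
      exact not_nonzero_of_eval_eq_zero (fun p => by simp [hS, hb]) hS0
    refine propTo_of_eval_eq_mul (k := a' / a) fun p => ?_
    rw [hG, hS]
    field_simp
    linear_combination l₂ p * hΔ
  · refine propTo_of_eval_eq_mul (k := b' / b) fun p => ?_
    rw [hG, hS]
    field_simp
    linear_combination (-l₁ p) * hΔ

theorem eval_eq_of_pencil {S G f : Conic} {A B C D P Q : ℝ × ℝ} (hCD : C ≠ D)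
    (hABC : lineForm A B C ≠ 0) (hABD : lineForm A B D ≠ 0) (hS : S.Through A B C D)
    (hG : G.Through A B C D) (hf : f.Through A B C D) (hS0 : S.Nonzero) (hGS : ¬ G.PropTo S)
    (hSPQ : S.eval P = S.eval Q) (hGPQ : G.eval P = G.eval Q) : f.eval P = f.eval Q := by
  obtain ⟨a, b, hS⟩ := exists_eval_eq_pencil hCD hABC hABD hS
  obtain ⟨a', b', hG⟩ := exists_eval_eq_pencil hCD hABC hABD hG
  obtain ⟨c, d, hf⟩ := exists_eval_eq_pencil hCD hABC hABD hf
  have hΔ := det_ne_zero_of_not_propTo hS hG hS0 hGS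
  rw [hS, hS] at hSPQ
  rw [hG, hG] at hGPQ
  set x := lineForm A B P * lineForm C D P - lineForm A B Q * lineForm C D Q
  set y := lineForm A C P * lineForm B D P - lineForm A C Q * lineForm B D Q
  have hx : x = 0 := by
    refine (mul_eq_zero.1 ?_).resolve_left hΔ
    linear_combination b' * hSPQ - b * hGPQ
  have hy : y = 0 := by
    refine (mul_eq_zero.1 ?_).resolve_left hΔ
    linear_combination a * hGPQ - a' * hSPQ
  rw [hf, hf]
  linear_combination c * hx + d * hy

end Conic

lemma setOf_mul_sq_add_eq_zero {a c : ℝ} (hac : a ≠ 0 ∨ c ≠ 0) :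
    {s : ℝ | a * s ^ 2 + c = 0} = ∅ ∨ ∃ e : ℝ, {s : ℝ | a * s ^ 2 + c = 0} = {-e, e} := by
  rcases eq_or_ne a 0 with rfl | ha
  · left
    ext s
    simpa using hac.resolve_left (not_not.2 rfl)
  have hroot : ∀ s : ℝ, a * s ^ 2 + c = 0 ↔ s ^ 2 = -c / a := fun s => by
    rw [eq_div_iff ha]
    constructor <;> intro h <;> linarith
  rcases lt_or_ge (-c / a) 0 with hneg | hnonneg
  · left
    ext s
    simp only [Set.mem_ofPred_eq, Set.mem_empty_iff_false, iff_false, hroot]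
    intro hs
    linarith [sq_nonneg s]
  · right
    obtain ⟨e, he⟩ : ∃ e : ℝ, e ^ 2 = -c / a := ⟨_, Real.sq_sqrt hnonneg⟩
    refine ⟨e, ?_⟩
    ext s
    simp only [Set.mem_ofPred_eq, Set.mem_insert_iff, Set.mem_singleton_iff, hroot, ← he,
      sq_eq_sq_iff_eq_or_eq_neg, or_comm]

lemma zeroSet_parmLine_of_even {φ : ℝ × ℝ → ℝ} {M w : ℝ × ℝ} (hw : w ≠ 0) {a c : ℝ}
    (hac : a ≠ 0 ∨ c ≠ 0) (hφ : ∀ s : ℝ, φ (M + s • w) = a * s ^ 2 + c) :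
    {p ∈ parmLine M w | φ p = 0} = ∅ ∨ {p ∈ parmLine M w | φ p = 0} = {M} ∨
      ∃ X Y : ℝ × ℝ, X ≠ Y ∧ M = midpoint ℝ X Y ∧ {p ∈ parmLine M w | φ p = 0} = {X, Y} := by
  have himage : {p ∈ parmLine M w | φ p = 0} =
      (fun s : ℝ => M + s • w) '' {s | a * s ^ 2 + c = 0} := by
    ext p
    constructor
    · rintro ⟨⟨s, rfl⟩, hs⟩
      exact ⟨s, by rwa [Set.mem_ofPred_eq, ← hφ], rfl⟩
    · rintro ⟨s, hs, rfl⟩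
      exact ⟨⟨s, rfl⟩, by rwa [hφ]⟩
  rw [himage]
  rcases setOf_mul_sq_add_eq_zero hac with h | ⟨e, h⟩
  · left
    rw [h, Set.image_empty]
  rw [h, Set.image_pair]
  rcases eq_or_ne e 0 with rfl | he
  · right; left
    simp
  · right; right
    refine ⟨_, _, fun hne => he ?_, ?_, rfl⟩
    · have := smul_left_injective ℝ hw (add_left_cancel hne)
      linarith
    · rw [midpoint_eq_smul_add]
      ext <;> simp <;> ring

theorem butterfly_concyclic_general
    (O : ℝ × ℝ) (r : ℝ)
    (A B C D : ℝ × ℝ)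
    (hAB : A ≠ B) (hAC : A ≠ C) (hAD : A ≠ D)
    (hBC : B ≠ C) (hBD : B ≠ D) (hCD : C ≠ D)
    (hA : OnCircle A O r) (hB : OnCircle B O r)
    (hC : OnCircle C O r) (hD : OnCircle D O r)
    (V u : ℝ × ℝ)
    (hAl : A ∉ parmLine V u) (hBl : B ∉ parmLine V u)
    (hCl : C ∉ parmLine V u)
    (G : Conic) (hG : G.Through A B C D)
    (hGcirc : ¬ G.PropTo (circleConic O r))
    (P Q : ℝ × ℝ) (hPQ : P ≠ Q)
    (hGl : {p ∈ parmLine V u | G.eval p = 0} = {P, Q})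
    (hdist : (P.1 - O.1) ^ 2 + (P.2 - O.2) ^ 2 = (Q.1 - O.1) ^ 2 + (Q.2 - O.2) ^ 2)
    (M : ℝ × ℝ) (hM : M = midpoint ℝ P Q) :
    ∀ f : Conic, f.Nonzero → f.Through A B C D →
      {p ∈ parmLine V u | f.eval p = 0} = ∅ ∨
      {p ∈ parmLine V u | f.eval p = 0} = {M} ∨
      ∃ X Y : ℝ × ℝ, X ≠ Y ∧ M = midpoint ℝ X Y ∧
        {p ∈ parmLine V u | f.eval p = 0} = {X, Y} := by
  intro f hf hfT
  have hABC := lineForm_ne_zero_of_onCircle hA hB hC hAB hAC hBC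
  have hABD := lineForm_ne_zero_of_onCircle hA hB hD hAB hAD hBD
  have hPl : P ∈ {p ∈ parmLine V u | G.eval p = 0} := by rw [hGl]; exact Set.mem_insert _ _
  have hQl : Q ∈ {p ∈ parmLine V u | G.eval p = 0} := by rw [hGl]; simp
  have hfPQ : f.eval P = f.eval Q :=
    Conic.eval_eq_of_pencil hCD hABC hABD (circleConic_through hA hB hC hD) hG hfT
      (circleConic_nonzero O r) hGcirc
      (by rw [circleConic_eval, circleConic_eval, hdist]) (hPl.2.trans hQl.2.symm)
  set w := Q - P
  have hw : w ≠ 0 := sub_ne_zero.2 hPQ.symm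
  have hline : parmLine M w = parmLine V u := hM ▸ parmLine_midpoint hPl.1 hQl.1 hPQ
  have hP : P = M + (-1 / 2 : ℝ) • w := by
    rw [hM, midpoint_eq_smul_add]; ext <;> simp [w] <;> ring
  have hQ : Q = M + (1 / 2 : ℝ) • w := by
    rw [hM, midpoint_eq_smul_add]; ext <;> simp [w] <;> ring
  -- `f (M - w/2) = f (M + w/2)` kills the odd part of the restriction of `f` to the line
  have hd : f.dirDeriv M w = 0 := by
    rw [hP, hQ, Conic.eval_add_smul, Conic.eval_add_smul] at hfPQ
    linarith
  have heven : ∀ s : ℝ, f.eval (M + s • w) = f.quadForm w * s ^ 2 + f.eval M := fun s => by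
    rw [Conic.eval_add_smul, hd, zero_mul, add_zero]
  obtain ⟨hfA, hfB, hfC, -⟩ := hfT
  rw [← hline] at hAl hBl hCl ⊢
  by_cases hzero : f.quadForm w = 0 ∧ f.eval M = 0
  · refine absurd hf
      (Conic.not_nonzero_of_eval_line hw (fun s => ?_) hAl hBl hCl hABC hfA hfB hfC)
    rw [heven, hzero.1, hzero.2, zero_mul, add_zero]
  · exact zeroSet_parmLine_of_even hw (not_and_or.1 hzero) heven

/-- **The Johnson–Volenec–Dergiades–Lim generalization of the butterfly theorem.**
Four base points lie on a circle with center `O`, and some conic through them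
meets a line `ℓ` in exactly two points `P ≠ Q` equidistant from `O`, with midpoint
`M`. Then every conic through the four base points meets `ℓ` either not at all,
or exactly at `M`, or exactly in a pair of distinct points whose midpoint is `M`. -/
theorem butterfly_concyclic
    (O : ℝ × ℝ) (r : ℝ) (hr : 0 < r)
    (A B C D : ℝ × ℝ)
    (hAB : A ≠ B) (hAC : A ≠ C) (hAD : A ≠ D)
    (hBC : B ≠ C) (hBD : B ≠ D) (hCD : C ≠ D)
    (hA : OnCircle A O r) (hB : OnCircle B O r)
    (hC : OnCircle C O r) (hD : OnCircle D O r)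
    (V u : ℝ × ℝ) (hu : u ≠ 0)
    (hAl : A ∉ parmLine V u) (hBl : B ∉ parmLine V u)
    (hCl : C ∉ parmLine V u) (hDl : D ∉ parmLine V u)
    (G : Conic) (hG0 : G.Nonzero) (hG : G.Through A B C D)
    (hGcirc : ¬ G.PropTo (circleConic O r))
    (P Q : ℝ × ℝ) (hPQ : P ≠ Q)
    (hGl : {p ∈ parmLine V u | G.eval p = 0} = {P, Q})
    (hdist : (P.1 - O.1) ^ 2 + (P.2 - O.2) ^ 2 = (Q.1 - O.1) ^ 2 + (Q.2 - O.2) ^ 2)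
    (M : ℝ × ℝ) (hM : M = midpoint ℝ P Q) :
    ∀ f : Conic, f.Nonzero → f.Through A B C D →
      {p ∈ parmLine V u | f.eval p = 0} = ∅ ∨
      {p ∈ parmLine V u | f.eval p = 0} = {M} ∨
      ∃ X Y : ℝ × ℝ, X ≠ Y ∧ M = midpoint ℝ X Y ∧
        {p ∈ parmLine V u | f.eval p = 0} = {X, Y} :=
  butterfly_concyclic_general O r A B C D hAB hAC hAD hBC hBD hCD hA hB hC hD V u hAl hBl hCl G hG
    hGcirc P Q hPQ hGl hdist M hM
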